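/- Every pareto-optimal round trip at s (among round trips of cost at most τ) consists only of pareto-optimal segments: if r = w·w' where w is a way from s to some node v and w' is a way from v to s, then w is not dominated (strictly better in one of cost/gain and at least as good in the other) by any other way from s to v whose replacement keeps total cost at most τ. -/

import Mathlib

open scoped BigOperators

variable {V : Type*}

/-- A way in a cost-gain network: a nonempty sequence of consecutive edges
from `u` to `v`. -/
def IsWay (w : List (V × V)) (u v : V) : Prop :=
  w ≠ [] ∧ w.Chain' (fun e f => e.2 = f.1) ∧
    w.head?.map Prod.fst = some u ∧ w.getLast?.map Prod.snd = some v

/-- Possibly empty way (empty only when endpoints coincide). -/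
def IsWayNil (w : List (V × V)) (u v : V) : Prop :=
  (w = [] ∧ u = v) ∨ IsWay w u v

/-- Sum of an edge attribute (cost or gain) over a way, with multiplicity. -/
def wsum (c : V × V → ℝ) (w : List (V × V)) : ℝ := (w.map c).sum

/-- `w` dominates `wh` in the cost-gain sense. -/
def Dominates (c g : V × V → ℝ) (w wh : List (V × V)) : Prop :=
  (wsum c wh > wsum c w ∧ wsum g wh ≤ wsum g w) ∨
  (wsum c wh ≥ wsum c w ∧ wsum g wh < wsum g w)

/-- `r` is a pareto-optimal round trip at `s` among round trips of cost at most `τ`. -/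
def ParetoOpt (c g : V × V → ℝ) (s : V) (τ : ℝ) (r : List (V × V)) : Prop :=
  IsWay r s s ∧ wsum c r ≤ τ ∧
    ∀ r', IsWay r' s s → wsum c r' ≤ τ → ¬ Dominates c g r' r

/-- The set of distinct (undirected) edges of a way. -/
def ES [DecidableEq V] (w : List (V × V)) : Finset (Sym2 V) :=
  (w.map (fun e => Sym2.mk e.1 e.2)).toFinset

/-- Gain of a way where each distinct (undirected) edge counts only once. -/
def setGain [DecidableEq V] (g : Sym2 V → ℝ) (w : List (V × V)) : ℝ :=
  ∑ e ∈ ES w, g e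

/-- Redundancy control with level `k`: every undirected edge occurs at most `k` times. -/
def RC [DecidableEq V] (k : ℕ) (w : List (V × V)) : Prop :=
  ∀ e : Sym2 V, (w.map (fun e => Sym2.mk e.1 e.2)).count e ≤ k

/-- Domination under redundancy control. -/
def DominatesRC [DecidableEq V] (c : V × V → ℝ) (g : Sym2 V → ℝ)
    (w wh : List (V × V)) : Prop :=
  ES w ⊆ ES wh ∧
  ((wsum c wh > wsum c w ∧ setGain g wh ≤ setGain g w) ∨
   (wsum c wh ≥ wsum c w ∧ setGain g wh < setGain g w))

lemma wsum_append (c : V × V → ℝ) (a b : List (V × V)) :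
    wsum c (a ++ b) = wsum c a + wsum c b := by
  simp [wsum]

lemma IsWay.append {w w' : List (V × V)} {u v x : V}
    (h : IsWay w u v) (h' : IsWay w' v x) : IsWay (w ++ w') u x := by
  obtain ⟨hne, hchain, hhead, hlast⟩ := h
  obtain ⟨hne', hchain', hhead', hlast'⟩ := h'
  refine ⟨by simp [hne], ?_, ?_, ?_⟩
  · rw [List.Chain', List.isChain_append]
    refine ⟨hchain, hchain', fun e he f hf => ?_⟩
    have he_end : e.2 = v := by rw [he] at hlast; simpa using hlast
    have hf_start : f.1 = v := by rw [hf] at hhead'; simpa using hhead'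
    rw [he_end, hf_start]
  · rwa [List.head?_append_of_ne_nil _ hne]
  · rwa [List.getLast?_append_of_ne_nil _ hne']

lemma Dominates.append_right {c g : V × V → ℝ} {wh w : List (V × V)}
    (h : Dominates c g wh w) (w' : List (V × V)) :
    Dominates c g (wh ++ w') (w ++ w') := by
  unfold Dominates at h ⊢
  simp only [wsum_append]
  rcases h with ⟨hc, hg⟩ | ⟨hc, hg⟩
  · exact Or.inl ⟨by linarith, by linarith⟩
  · exact Or.inr ⟨by linarith, by linarith⟩

theorem stmt_3_general (c g : V × V → ℝ) (s v : V) (τ : ℝ)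
    (w w' : List (V × V)) (hw' : IsWay w' v s)
    (hr : ParetoOpt c g s τ (w ++ w')) :
    ∀ wh : List (V × V), IsWay wh s v → wsum c wh + wsum c w' ≤ τ →
      ¬ Dominates c g wh w := by
  intro wh hwh hcost hdom
  obtain ⟨-, -, hopt⟩ := hr
  exact hopt (wh ++ w') (hwh.append hw') (by rwa [wsum_append]) (hdom.append_right w')

/-- every pareto-optimal round trip consists only of pareto-optimal
segments: if `r = w ++ w'` with `w : s → v` and `w' : v → s`, then no other way
`wh : s → v` whose replacement keeps the total cost at most `τ` dominates `w`. -/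
theorem stmt_3 (c g : V × V → ℝ) (s v : V) (τ : ℝ)
    (w w' : List (V × V)) (hw : IsWay w s v) (hw' : IsWay w' v s)
    (hr : ParetoOpt c g s τ (w ++ w')) :
    ∀ wh : List (V × V), IsWay wh s v → wsum c wh + wsum c w' ≤ τ →
      ¬ Dominates c g wh w :=
  stmt_3_general c g s v τ w w' hw' hr
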